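/- Let A be an integer m×n matrix with rows a^{(1)},...,a^{(m)}, let b ∈ ℤ^m, and let v be a vertex of the integer hull P_I with S = supp(v), s = |S|. Set Γ = 1.12·Σ_{j=1}^m ‖a^{(j)}[S]‖₂ + sqrt(Σ_{i∈S} ‖A_i‖₁²), where A_i are the columns of A[S]. Then s ≤ m·log₂(2eΓ/m + 2e). -/

import Mathlib

/-!
A vertex `v` of `P_I` is an integer point `z ≥ 0` with `Az = b`, and no nonzero `w ∈ ker A`
with `|w| ≤ z` exists, since `v` would be the midpoint of `z ± w`. Applied to `w = 1_T - 1_T'`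
for `T, T' ⊆ S`, this makes `T ↦ A 1_T` injective on the subsets of `S`.

For independent uniformly random `T, T' ⊆ S`, each row satisfies
`E (a⁽ʲ⁾ · (1_T - 1_T'))² = ‖a⁽ʲ⁾[S]‖₂² / 2`, so by Cauchy–Schwarz
`E ‖A 1_T - A 1_T'‖₁ ≤ Σⱼ ‖a⁽ʲ⁾[S]‖₂ / √2`. Choosing `T₀` whose average distance to the other
`A 1_T` is at most this mean and applying Markov's inequality, at least
`(1 - 1/(1.12 √2)) 2^s` subsets `T` have `A 1_T` in the `ℓ₁`-ball of radius
`Γ₁ = 1.12 Σⱼ ‖a⁽ʲ⁾[S]‖₂` around `A 1_T₀`, and these are distinct lattice points. That ball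
contains at most `2^m (Γ₁ + m)^m / m!` lattice points, and since `e (1 - 1/(1.12 √2)) ≥ 1`
and `e m^m ≤ e^m m!`, we get `2^s ≤ (2e(Γ + m)/m)^m`.
-/

open Matrix

/-- The integer hull of `{x ≥ 0 : Ax = b}`. -/
def integerHull {m n : ℕ} (A : Matrix (Fin m) (Fin n) ℤ) (b : Fin m → ℤ) :
    Set (Fin n → ℝ) :=
  convexHull ℝ
    {x | ∃ z : Fin n → ℤ, (∀ i, 0 ≤ z i) ∧ A.mulVec z = b ∧ x = fun i => (z i : ℝ)}

/-- `v` is a vertex of `P` if `v ∈ P` and `v` is not in the convex hull of `P \ {v}`. -/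
def IsVertex {n : ℕ} (P : Set (Fin n → ℝ)) (v : Fin n → ℝ) : Prop :=
  v ∈ P ∧ v ∉ convexHull ℝ (P \ {v})

open Finset Real
open scoped Nat

-- `A x` for the indicator vector `x` of `T`; the hypercube `{0,1}^S` is encoded by `S.powerset`.
def sumCols {κ ι R : Type*} [AddCommMonoid R] (A : Matrix κ ι R) (T : Finset ι) : κ → R :=
  fun j ↦ ∑ i ∈ T, A j i

section Vertex

variable {m n : ℕ}

theorem IsVertex.mem_of_convexHull {X : Set (Fin n → ℝ)} {v : Fin n → ℝ}
    (h : IsVertex (convexHull ℝ X) v) : v ∈ X := by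
  by_contra hv
  have hX : X ⊆ convexHull ℝ X \ {v} := fun x hx ↦
    ⟨subset_convexHull ℝ X hx, by rintro rfl; exact hv hx⟩
  exact h.2 (convexHull_mono hX h.1)

theorem IsVertex.eq_zero_of_add_mem_of_sub_mem {P : Set (Fin n → ℝ)} {v w : Fin n → ℝ}
    (h : IsVertex P v) (hadd : v + w ∈ P) (hsub : v - w ∈ P) : w = 0 := by
  by_contra hw
  have hmid : v ∈ segment ℝ (v + w) (v - w) := ⟨1 / 2, 1 / 2, by norm_num, by norm_num,
    by norm_num, by module⟩
  have hadd' : v + w ∈ P \ {v} := ⟨hadd, by simpa using hw⟩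
  have hsub' : v - w ∈ P \ {v} := ⟨hsub, by simpa using hw⟩
  exact h.2 (segment_subset_convexHull hadd' hsub' hmid)

theorem cast_mem_integerHull {A : Matrix (Fin m) (Fin n) ℤ} {b : Fin m → ℤ} {z : Fin n → ℤ}
    (hz : ∀ i, 0 ≤ z i) (hzb : A *ᵥ z = b) : (fun i ↦ (z i : ℝ)) ∈ integerHull A b :=
  subset_convexHull ℝ _ ⟨z, hz, hzb, rfl⟩

theorem IsVertex.eq_zero_of_mulVec_eq_zero {A : Matrix (Fin m) (Fin n) ℤ} {b : Fin m → ℤ}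
    {z w : Fin n → ℤ} (hv : IsVertex (integerHull A b) fun i ↦ (z i : ℝ)) (hzb : A *ᵥ z = b)
    (hw : A *ᵥ w = 0) (hwz : ∀ i, |w i| ≤ z i) : w = 0 := by
  have hadd := cast_mem_integerHull (A := A) (z := z + w)
    (fun i ↦ by simp only [Pi.add_apply]; linarith [neg_abs_le (w i), hwz i])
    (by rw [mulVec_add, hzb, hw, add_zero])
  have hsub := cast_mem_integerHull (A := A) (z := z - w)
    (fun i ↦ by simp only [Pi.sub_apply]; linarith [le_abs_self (w i), hwz i])
    (by rw [mulVec_sub, hzb, hw, sub_zero])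
  have := hv.eq_zero_of_add_mem_of_sub_mem (w := fun i ↦ (w i : ℝ))
    (by convert hadd using 1; ext; simp) (by convert hsub using 1; ext; simp)
  ext i
  simpa using congrFun this i

theorem IsVertex.injOn_sumCols {A : Matrix (Fin m) (Fin n) ℤ} {b : Fin m → ℤ}
    {v : Fin n → ℝ} (hv : IsVertex (integerHull A b) v) {S : Finset (Fin n)}
    (hS : ∀ i ∈ S, v i ≠ 0) : Set.InjOn (sumCols A) S.powerset := by
  obtain ⟨z, hz, hzb, rfl⟩ := hv.mem_of_convexHull
  intro T hT T' hT' h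
  let w : Fin n → ℤ := fun i ↦ (if i ∈ T then 1 else 0) - (if i ∈ T' then 1 else 0)
  have hw : A *ᵥ w = 0 := by
    ext j
    have := congrFun h j
    simp_all [w, sumCols, mulVec, dotProduct, mul_sub, sum_sub_distrib]
  have hwz : ∀ i, |w i| ≤ z i := by
    intro i
    by_cases hi : i ∈ S
    · have : z i ≠ 0 := fun h0 ↦ hS i hi (by simp [h0])
      have := hz i
      simp only [w]
      split_ifs <;> simp <;> omega
    · have hiT : i ∉ T := fun h ↦ hi (mem_powerset.1 hT h)
      have hiT' : i ∉ T' := fun h ↦ hi (mem_powerset.1 hT' h)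
      simpa [w, hiT, hiT'] using hz i
  have hw0 := hv.eq_zero_of_mulVec_eq_zero hzb hw hwz
  ext i
  have := congrFun hw0 i
  simp only [w, Pi.zero_apply] at this
  split_ifs at this <;> simp_all

end Vertex

section SubsetSums

variable {α : Type*} [DecidableEq α]

theorem sum_powerset_sum_powerset_sub_sq (S : Finset α) (a : α → ℝ) :
    ∑ T ∈ S.powerset, ∑ T' ∈ S.powerset, (∑ i ∈ T, a i - ∑ i ∈ T', a i) ^ 2 =
      4 ^ #S / 2 * ∑ i ∈ S, a i ^ 2 := by
  induction S using Finset.induction_on with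
  | empty => simp
  | insert x S hx ih =>
    have sum_insert_of_mem_powerset :
        ∀ T ∈ S.powerset, ∑ i ∈ insert x T, a i = a x + ∑ i ∈ T, a i := fun T hT ↦
      sum_insert fun hxT ↦ hx (mem_powerset.1 hT hxT)
    have split : ∀ T ∈ S.powerset, ∀ T' ∈ S.powerset,
        ((∑ i ∈ T, a i - ∑ i ∈ T', a i) ^ 2 +
          (∑ i ∈ T, a i - ∑ i ∈ insert x T', a i) ^ 2) +
        ((∑ i ∈ insert x T, a i - ∑ i ∈ T', a i) ^ 2 +
          (∑ i ∈ insert x T, a i - ∑ i ∈ insert x T', a i) ^ 2) =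
        4 * (∑ i ∈ T, a i - ∑ i ∈ T', a i) ^ 2 + 2 * a x ^ 2 := by
      intro T hT T' hT'
      rw [sum_insert_of_mem_powerset T hT, sum_insert_of_mem_powerset T' hT']
      ring
    simp only [sum_powerset_insert hx, ← sum_add_distrib]
    rw [sum_congr rfl fun T hT ↦ sum_congr rfl (split T hT)]
    simp only [sum_add_distrib, ← mul_sum, ih, sum_const, card_powerset, nsmul_eq_mul,
      card_insert_of_notMem hx, sum_insert hx]
    push_cast
    have h4 : (2 : ℝ) ^ #S * 2 ^ #S = 4 ^ #S := by rw [← mul_pow]; norm_num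
    linear_combination (2 * a x ^ 2) * h4

theorem sum_powerset_sum_powerset_abs_sub_le (S : Finset α) (a : α → ℝ) :
    ∑ T ∈ S.powerset, ∑ T' ∈ S.powerset, |∑ i ∈ T, a i - ∑ i ∈ T', a i| ≤
      4 ^ #S * √(∑ i ∈ S, a i ^ 2) / √2 := by
  refine le_of_pow_le_pow_left₀ two_ne_zero (by positivity) ?_
  have hcard : (#(S.powerset ×ˢ S.powerset) : ℝ) = 4 ^ #S := by
    rw [card_product, card_powerset]; push_cast; rw [← mul_pow]; norm_num
  calc (∑ T ∈ S.powerset, ∑ T' ∈ S.powerset, |∑ i ∈ T, a i - ∑ i ∈ T', a i|) ^ 2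
      ≤ #(S.powerset ×ˢ S.powerset) * ∑ T ∈ S.powerset, ∑ T' ∈ S.powerset,
          |∑ i ∈ T, a i - ∑ i ∈ T', a i| ^ 2 := by
        simpa only [sum_product] using sq_sum_le_card_mul_sum_sq
          (s := S.powerset ×ˢ S.powerset) (f := fun p ↦ |∑ i ∈ p.1, a i - ∑ i ∈ p.2, a i|)
    _ = (4 ^ #S * √(∑ i ∈ S, a i ^ 2) / √2) ^ 2 := by
        simp only [sq_abs, sum_powerset_sum_powerset_sub_sq, hcard]
        rw [div_pow, mul_pow, sq_sqrt (by positivity), sq_sqrt zero_le_two]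
        ring

end SubsetSums

theorem card_sub_le_card_filter_le_of_sum_le {ι : Type*} {P : Finset ι} {f : ι → ℝ} {r δ : ℝ}
    (hf : ∀ x ∈ P, 0 ≤ f x) (hr : 0 ≤ r) (hδ : 0 ≤ δ) (h : ∑ x ∈ P, f x ≤ δ * r) :
    (#P : ℝ) - δ ≤ #{x ∈ P | f x ≤ r} := by
  suffices (#{x ∈ P | ¬f x ≤ r} : ℝ) ≤ δ by
    rw [← card_filter_add_card_filter_not (s := P) (fun x ↦ f x ≤ r)]; push_cast; linarith
  obtain hB | hB := eq_empty_or_nonempty {x ∈ P | ¬f x ≤ r}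
  · rw [hB, card_empty, Nat.cast_zero]; exact hδ
  have : #{x ∈ P | ¬f x ≤ r} * r < δ * r := calc
    #{x ∈ P | ¬f x ≤ r} * r = ∑ _x ∈ {x ∈ P | ¬f x ≤ r}, r := by simp
    _ < ∑ x ∈ {x ∈ P | ¬f x ≤ r}, f x :=
      sum_lt_sum_of_nonempty hB fun x hx ↦ not_le.1 (mem_filter.1 hx).2
    _ ≤ ∑ x ∈ P, f x := sum_le_sum_of_subset_of_nonneg (filter_subset _ _) fun x hx _ ↦ hf x hx
    _ ≤ δ * r := h
  exact (lt_of_mul_lt_mul_right this hr).le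

theorem card_le_of_forall_sum_natAbs_le {m K : ℕ} (X : Finset (Fin m → ℤ))
    (hX : ∀ z ∈ X, ∑ j, (z j).natAbs ≤ K) : #X ≤ 2 ^ m * (m + 1).multichoose K := by
  let Φ : (Fin m → ℤ) → (Fin m → Bool) × (Fin (m + 1) → ℕ) := fun z ↦
    (fun j ↦ decide (z j < 0), Fin.cons (K - ∑ j, (z j).natAbs) fun j ↦ (z j).natAbs)
  have hΦ : ∀ z ∈ X, Φ z ∈ (univ : Finset (Fin m → Bool)) ×ˢ piAntidiag univ K := fun z hz ↦ by
    simp [Φ, Fin.sum_univ_succ, Nat.sub_add_cancel (hX z hz)]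
  have hΦinj : Set.InjOn Φ X := fun z _ z' _ h ↦ by
    simp only [Φ, Prod.mk.injEq, funext_iff, Fin.forall_fin_succ, Fin.cons_succ] at h
    funext j
    have := h.1 j
    have := h.2.2 j
    simp only [decide_eq_decide] at *
    omega
  have hcard : #(piAntidiag (univ : Finset (Fin (m + 1))) K) = (m + 1).multichoose K := by
    rw [← map_sym_eq_piAntidiag, card_map, sym_univ, card_univ, Sym.card_sym_eq_multichoose,
      Fintype.card_fin]
  simpa [hcard] using card_le_card_of_injOn Φ hΦ hΦinj

theorem card_le_of_forall_sum_abs_le {m : ℕ} (X : Finset (Fin m → ℤ)) {r : ℝ} (hr : 0 ≤ r)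
    (hX : ∀ z ∈ X, ∑ j, |(z j : ℝ)| ≤ r) : (#X : ℝ) ≤ 2 ^ m * (r + m) ^ m / m ! := by
  have hK : ∀ z ∈ X, ∑ j, (z j).natAbs ≤ ⌊r⌋₊ := fun z hz ↦
    Nat.le_floor <| by simpa [Nat.cast_natAbs] using hX z hz
  have hchoose : ((m + 1).multichoose ⌊r⌋₊ : ℝ) ≤ (⌊r⌋₊ + m : ℝ) ^ m / m ! := by
    rw [Nat.multichoose_eq, show m + 1 + ⌊r⌋₊ - 1 = ⌊r⌋₊ + m by omega, Nat.choose_symm_add]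
    exact_mod_cast Nat.choose_le_pow_div m (⌊r⌋₊ + m)
  calc (#X : ℝ) ≤ 2 ^ m * (m + 1).multichoose ⌊r⌋₊ := by
        exact_mod_cast card_le_of_forall_sum_natAbs_le X hK
    _ ≤ 2 ^ m * ((⌊r⌋₊ + m : ℝ) ^ m / m !) := by gcongr
    _ ≤ 2 ^ m * (r + m) ^ m / m ! := by
        rw [mul_div_assoc]
        gcongr
        exact Nat.floor_le hr

theorem sum_powerset_sum_powerset_sum_abs_sumCols_sub_le {κ ι : Type*} [Fintype κ]
    [DecidableEq ι] (A : Matrix κ ι ℤ) (S : Finset ι) :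
    ∑ T' ∈ S.powerset, ∑ T ∈ S.powerset, ∑ j, |((sumCols A T j : ℤ) : ℝ) - sumCols A T' j| ≤
      4 ^ #S * (∑ j, √(∑ i ∈ S, (A j i : ℝ) ^ 2)) / √2 := by
  have hrow : ∀ j, ∑ T' ∈ S.powerset, ∑ T ∈ S.powerset,
      |((sumCols A T j : ℤ) : ℝ) - sumCols A T' j| ≤
        4 ^ #S * √(∑ i ∈ S, (A j i : ℝ) ^ 2) / √2 := fun j ↦ by
    rw [sum_comm]
    simpa [sumCols] using sum_powerset_sum_powerset_abs_sub_le S fun i ↦ (A j i : ℝ)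
  rw [(sum_congr rfl fun _ _ ↦ sum_comm).trans sum_comm, mul_sum, sum_div]
  exact sum_le_sum fun j _ ↦ hrow j

theorem mul_two_pow_card_le_of_injOn_sumCols {m : ℕ} {ι : Type*} [DecidableEq ι]
    (A : Matrix (Fin m) ι ℤ) (S : Finset ι) {c : ℝ} (hc : 0 < c)
    (hinj : Set.InjOn (sumCols A) S.powerset) :
    (1 - 1 / (c * √2)) * 2 ^ #S ≤
      2 ^ m * (c * ∑ j, √(∑ i ∈ S, (A j i : ℝ) ^ 2) + m) ^ m / m ! := by
  set C := ∑ j, √(∑ i ∈ S, (A j i : ℝ) ^ 2)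
  set P := S.powerset
  let N : Finset ι → Finset ι → ℝ := fun T T' ↦ ∑ j, |((sumCols A T j : ℤ) : ℝ) - sumCols A T' j|
  have hP : (#P : ℝ) = 2 ^ #S := by simp [P]
  have h4 : (4 : ℝ) ^ #S = 2 ^ #S * 2 ^ #S := by rw [← mul_pow]; norm_num
  obtain ⟨T₀, -, hT₀⟩ : ∃ T₀ ∈ P, #P * ∑ T ∈ P, N T T₀ ≤ ∑ T' ∈ P, ∑ T ∈ P, N T T' :=
    exists_le_of_sum_le ⟨∅, empty_mem_powerset S⟩ (by rw [← mul_sum, sum_const, nsmul_eq_mul])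
  let good : Finset (Finset ι) := {T ∈ P | N T T₀ ≤ c * C}
  have hgood : (1 - 1 / (c * √2)) * 2 ^ #S ≤ #good := by
    convert card_sub_le_card_filter_le_of_sum_le (P := P) (f := (N · T₀))
      (δ := 2 ^ #S / (c * √2)) (r := c * C) (fun T _ ↦ sum_nonneg fun j _ ↦ abs_nonneg _)
      (by positivity) (by positivity) ?_ using 1
    · rw [hP]; ring
    calc ∑ T ∈ P, N T T₀ ≤ 2 ^ #S * C / √2 := by
          have := hT₀.trans (sum_powerset_sum_powerset_sum_abs_sumCols_sub_le A S)
          rw [hP, h4, mul_assoc, mul_div_assoc] at this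
          exact le_of_mul_le_mul_left this (by positivity)
      _ = 2 ^ #S / (c * √2) * (c * C) := by field_simp
  have hdiff : Set.InjOn (fun T ↦ sumCols A T - sumCols A T₀) good :=
    fun T hT T' hT' h ↦ hinj (filter_subset _ P hT) (filter_subset _ P hT') (sub_left_injective h)
  refine hgood.trans ?_
  rw [← card_image_of_injOn hdiff]
  refine card_le_of_forall_sum_abs_le _ (by positivity) ?_
  simp only [mem_image]
  rintro _ ⟨T, hT, rfl⟩
  simpa [N] using (mem_filter.1 hT).2

theorem exp_one_mul_pow_self_le_exp_one_pow_mul_factorial {m : ℕ} (hm : 0 < m) :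
    exp 1 * m ^ m ≤ exp 1 ^ m * m ! := by
  induction m, hm using Nat.le_induction with
  | base => simp
  | succ k hk ih =>
    have hk' : (0 : ℝ) < k := by exact_mod_cast hk
    have hsucc : ((k : ℝ) + 1) ^ k ≤ exp 1 * k ^ k := calc
      ((k : ℝ) + 1) ^ k = k ^ k * (1 + (k : ℝ)⁻¹) ^ k := by
        rw [← mul_pow, mul_add, mul_inv_cancel₀ hk'.ne', mul_one]
      _ ≤ k ^ k * exp 1 := by gcongr; exact one_add_inv_pow_le_exp
      _ = exp 1 * k ^ k := mul_comm _ _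
    push_cast [Nat.factorial_succ]
    calc exp 1 * ((k : ℝ) + 1) ^ (k + 1) = (k + 1) * exp 1 * ((k : ℝ) + 1) ^ k := by ring
      _ ≤ (k + 1) * exp 1 * (exp 1 * k ^ k) := by gcongr
      _ ≤ (k + 1) * exp 1 * (exp 1 ^ k * k !) := by gcongr
      _ = exp 1 ^ (k + 1) * ((k + 1) * k !) := by ring

theorem exp_one_mul_two_pow_mul_add_pow_div_factorial_le {m : ℕ} (hm : 0 < m) {x : ℝ}
    (hx : 0 ≤ x) :
    exp 1 * (2 ^ m * (x + m) ^ m / m !) ≤ (2 * exp 1 * x / m + 2 * exp 1) ^ m := by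
  have hfac := exp_one_mul_pow_self_le_exp_one_pow_mul_factorial hm
  rw [show 2 * exp 1 * x / m + 2 * exp 1 = 2 * exp 1 * (x + m) / m by field_simp, div_pow,
    mul_pow, mul_pow, le_div_iff₀ (by positivity)]
  calc exp 1 * (2 ^ m * (x + m) ^ m / m !) * m ^ m
      = exp 1 * m ^ m * (2 ^ m * (x + m) ^ m / m !) := by ring
    _ ≤ exp 1 ^ m * m ! * (2 ^ m * (x + m) ^ m / m !) := by gcongr
    _ = 2 ^ m * exp 1 ^ m * (x + m) ^ m := by field_simp

theorem one_le_exp_one_mul_one_sub_inv : 1 ≤ exp 1 * (1 - 1 / (1.12 * √2)) := by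
  have hsqrt : (1.414 : ℝ) ≤ √2 := le_sqrt_of_sq_le (by norm_num)
  have he : (2.718 : ℝ) ≤ exp 1 := exp_one_gt_d9.le.trans' (by norm_num)
  rw [one_sub_div (by positivity), mul_div_assoc', le_div_iff₀ (by positivity)]
  nlinarith [mul_le_mul he hsqrt (by norm_num) (exp_pos 1).le]

open Classical in
theorem stmt12 {m n : ℕ} (hm : 0 < m) (A : Matrix (Fin m) (Fin n) ℤ) (b : Fin m → ℤ)
    (v : Fin n → ℝ) (hv : IsVertex (integerHull A b) v)
    (S : Finset (Fin n)) (hS : S = Finset.univ.filter (fun i => v i ≠ 0))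
    (Γ : ℝ)
    (hΓ : Γ = 1.12 * (∑ j : Fin m, Real.sqrt (∑ i ∈ S, ((A j i : ℝ)) ^ 2)) +
      Real.sqrt (∑ i ∈ S, ((∑ j : Fin m, |(A j i : ℝ)|)) ^ 2)) :
    (S.card : ℝ) ≤
      m * Real.logb 2 (2 * Real.exp 1 * Γ / m + 2 * Real.exp 1) := by
  have hinj := hv.injOn_sumCols (S := S) fun i hi ↦ by simpa [hS] using hi
  set Γ₁ := 1.12 * ∑ j, √(∑ i ∈ S, (A j i : ℝ) ^ 2)
  have hΓ₁ : 0 ≤ Γ₁ := by positivity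
  have hΓ₁Γ : Γ₁ ≤ Γ := hΓ ▸ le_add_of_nonneg_right (sqrt_nonneg _)
  have hpow : (2 : ℝ) ^ #S ≤ (2 * exp 1 * Γ / m + 2 * exp 1) ^ m := calc
    (2 : ℝ) ^ #S ≤ exp 1 * ((1 - 1 / (1.12 * √2)) * 2 ^ #S) := by
      rw [← mul_assoc]; exact le_mul_of_one_le_left (by positivity) one_le_exp_one_mul_one_sub_inv
    _ ≤ exp 1 * (2 ^ m * (Γ₁ + m) ^ m / m !) := by
      gcongr; exact mul_two_pow_card_le_of_injOn_sumCols A S (by norm_num) hinj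
    _ ≤ exp 1 * (2 ^ m * (Γ + m) ^ m / m !) := by gcongr
    _ ≤ (2 * exp 1 * Γ / m + 2 * exp 1) ^ m :=
      exp_one_mul_two_pow_mul_add_pow_div_factorial_le hm (hΓ₁.trans hΓ₁Γ)
  have hlog := logb_le_logb_of_le (b := 2) one_lt_two (by positivity) hpow
  rwa [logb_pow, logb_pow, logb_self_eq_one one_lt_two, mul_one] at hlog
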